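/- arXiv:2008.08506 — 2 statements merged into one kernel-verified Lean document; each statement's English description precedes it below -/
import Mathlib

section
/- Let k ≥ 2 and let s_{2k} be the Fibonacci word of order 2k. Then for every i = 0, 1, …, k-2, the word a·x_{2(k-i)}·b has exactly F_{2i} occurrences as a circular factor of s_{2k}, and the word a·x_{2(k-i)-1}·b has exactly F_{2i+1} occurrences as a circular factor of s_{2k} (where the number of occurrences of u as a circular factor of w is the number of positions j ∈ {1,…,|w|} such that u is a prefix of conj_j(w)). -/
namespace BWT

/-- The two-letter ordered alphabet `{a, b}` with `a < b`, encoded as `Bool` with `a = false`. -/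
abbrev Letter := Bool

/-- The letter `a`. -/
abbrev la : Letter := false

/-- The letter `b`. -/
abbrev lb : Letter := true

/-- A (binary) word. -/
abbrev Word := List Letter

/-- All conjugates (rotations) of a word, listed by rotation amount. -/
def rotations (w : Word) : List Word := (List.range w.length).map w.rotate

/-- A word is primitive if all of its `|w|` conjugates are distinct. -/
def Primitive (w : Word) : Prop := (rotations w).Nodup

/-- The conjugates of `w`, sorted lexicographically. -/
def sortedRotations (w : Word) : List Word := (rotations w).insertionSort (· ≤ ·)

/-- The Burrows–Wheeler transform: last letters of the lexicographically sorted conjugates. -/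
def bwt (w : Word) : Word := (sortedRotations w).map (fun u => u.getLastD la)

/-- Number of maximal equal-letter runs of a word. -/
def runs (w : Word) : ℕ := (w.destutter (· ≠ ·)).length

/-- `r(w)`: the number of runs of the BWT of `w`. -/
def rr (w : Word) : ℕ := runs (bwt w)

/-- The runs-ratio `ρ(w)`. -/
def rho (w : Word) : ℚ :=
  max ((rr w : ℚ) / (rr w.reverse : ℚ)) ((rr w.reverse : ℚ) / (rr w : ℚ))

/-- `n`-th power (concatenation) of a word. -/
def wpow (w : Word) : ℕ → Word
  | 0 => []
  | n + 1 => w ++ wpow w n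

/-- Standard words for the directive sequence `d`:
`s 0 = b`, `s 1 = a`, `s (i+2) = (s (i+1))^(d i) · s i`. -/
def std (d : ℕ → ℕ) : ℕ → Word
  | 0 => [lb]
  | 1 => [la]
  | n + 2 => wpow (std d (n + 1)) (d n) ++ std d n

/-- Fibonacci words: `s 0 = b`, `s 1 = a`, `s (i+2) = s (i+1) · s i`. -/
def fw : ℕ → Word
  | 0 => [lb]
  | 1 => [la]
  | n + 2 => fw (n + 1) ++ fw n

/-- Fibonacci numbers with `F 0 = F 1 = 1`. -/
def fib : ℕ → ℕ
  | 0 => 1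
  | 1 => 1
  | n + 2 => fib (n + 1) + fib n

/-- The word `x i`, i.e. the Fibonacci word of order `i` with its last two letters removed
(so that `s_{2k} = x_{2k}·ab` and `s_{2k+1} = x_{2k+1}·ba`). -/
def x (i : ℕ) : Word := (fw i).take ((fw i).length - 2)

/-- `u` is a circular factor of `w`: a prefix of some conjugate of `w`. -/
def CircFactor (u w : Word) : Prop := ∃ i < w.length, u <+: w.rotate i

/-- A circular factor `u` is left-special in `w` if both `a·u` and `b·u` are circular factors. -/
def LeftSpecial (u w : Word) : Prop := CircFactor (la :: u) w ∧ CircFactor (lb :: u) w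

/-- Number of occurrences of `u` as a circular factor of `w`. -/
def occ (u w : Word) : ℕ :=
  ((List.range w.length).filter (fun j => decide (u <+: w.rotate j))).length

end BWT


/-!
Put `u = a·x_m·b`. Since `x_m` is a palindrome, `u` is unbordered, and `|u| = F_m`.
Two circular occurrences of an unbordered word in a circular word shorter than `2|u|` would
overlap in a border, so `u`, which does occur in `s_m` and in `s_{m+1}`, occurs exactly once in
each. For `n ≥ m` the word `s_{n+2} = s_{n+1} s_n` has two factors of length at least `|u|` that
share their prefix of length `|u| - 1`, so every circular occurrence of `u` in `s_{n+2}` is read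
inside one factor, as a circular occurrence there. The counts thus follow the Fibonacci
recurrence, and `u` occurs `F_t` times in `s_{m+t}`.
-/

theorem Nat.exists_even_add_three_or_add_four {m : ℕ} (hm : 3 ≤ m) :
    ∃ n, Even n ∧ (m = n + 3 ∨ m = n + 4) := by
  rcases Nat.even_or_odd m with ⟨r, hr⟩ | ⟨r, hr⟩
  · exact ⟨2 * (r - 2), even_two_mul _, Or.inr (by omega)⟩
  · exact ⟨2 * (r - 1), even_two_mul _, Or.inl (by omega)⟩

namespace List

variable {α : Type*}

def Unbordered (u : List α) : Prop := ∀ v, v <+: u → v <:+ u → v = [] ∨ v = u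

theorem unbordered_cons_append_singleton {c d : α} (hcd : c ≠ d) {X : List α}
    (hX : X.reverse = X) : (c :: (X ++ [d])).Unbordered := by
  classical
  intro v hpre hsuf
  by_contra! hv
  have hlt : v.length ≤ X.length + 1 := by
    simpa using lt_of_le_of_ne hpre.length_le (fun h => hv.2 (hpre.eq_of_length h))
  obtain ⟨t, rfl⟩ : ∃ t, v = c :: t := by
    obtain ⟨e, t, rfl⟩ := exists_cons_of_ne_nil hv.1
    exact ⟨t, by rw [(cons_prefix_cons.1 hpre).1]⟩
  have hrev : (c :: t).reverse <+: d :: (X ++ [c]) := by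
    simpa [hX] using hsuf.reverse
  obtain ⟨e, s, hs⟩ := exists_cons_of_ne_nil (reverse_ne_nil_iff.2 hv.1)
  rw [hs] at hrev
  obtain ⟨rfl, hs'⟩ := cons_prefix_cons.1 hrev
  have htX : t.length ≤ X.length := by simpa using hlt
  have hlen : s.length = t.length := by simpa using (congrArg length hs).symm
  have ht : t <+: X := prefix_of_prefix_length_le (cons_prefix_cons.1 hpre).2
    (prefix_append _ _) htX
  have hsX : s <+: X := prefix_of_prefix_length_le hs' (prefix_append _ _)
    (hlen ▸ htX)
  have hst : s = t := (prefix_of_prefix_length_le hsX ht hlen.le).eq_of_length hlen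
  subst hst
  -- `(c :: s).reverse = d :: s` is impossible: the two sides contain different numbers of `c`s.
  have := congrArg (count c) hs
  simp [Ne.symm hcd] at this

theorem Unbordered.eq_zero_of_prefix_rotate {u S : List α} {d : ℕ} (hu : u.Unbordered)
    (h₁ : u <+: S) (h₂ : u <+: S.rotate d) (hd : d < u.length) : d = 0 := by
  have hdS : d ≤ S.length := hd.le.trans h₁.length_le
  -- Both `u` and its suffix `u.drop d` are prefixes of `S.drop d ++ S`, so the latter is a border.
  have h₂' : u <+: S.drop d ++ S := h₂.trans <| by
    rw [rotate_eq_drop_append_take hdS]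
    exact (prefix_append_right_inj _).2 (take_prefix d S)
  have hdrop : u.drop d <+: S.drop d ++ S := by
    rw [prefix_iff_eq_take.1 h₁, drop_take]
    exact (take_prefix _ _).trans (prefix_append _ _)
  have hborder := hu _ (prefix_of_prefix_length_le hdrop h₂' (by simp)) (drop_suffix d u)
  rcases hborder with h | h
  · rw [drop_eq_nil_iff] at h; omega
  · have := congrArg length h; rw [length_drop] at this; omega

theorem Unbordered.eq_of_prefix_rotate {u w : List α} (hu : u.Unbordered)
    (hw : w.length < 2 * u.length) {i j : ℕ} (hi : i < w.length) (hj : j < w.length)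
    (h_i : u <+: w.rotate i) (h_j : u <+: w.rotate j) : i = j := by
  wlog hij : i ≤ j generalizing i j
  · exact (this hj hi h_j h_i (by omega)).symm
  rcases lt_or_ge (j - i) u.length with h | h
  · have := hu.eq_zero_of_prefix_rotate h_i (d := j - i)
      (by rwa [rotate_rotate, Nat.add_sub_cancel' hij]) h
    omega
  · have hrot : (w.rotate j).rotate (w.length - (j - i)) = w.rotate i := by
      rw [rotate_rotate, show j + (w.length - (j - i)) = w.length + i by omega,
        ← rotate_rotate, rotate_length]
    have := hu.eq_zero_of_prefix_rotate h_j (hrot ▸ h_i) (by omega)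
    omega

theorem take_rotate_append {A B : List α} {j n : ℕ} (hj : j < A.length) (hn : n ≤ A.length)
    (h : A.take (n - 1) = B.take (n - 1)) :
    ((A ++ B).rotate j).take n = (A.rotate j).take n := by
  rw [rotate_eq_drop_append_take (by rw [length_append]; omega), rotate_eq_drop_append_take hj.le,
    drop_append_of_le_length hj.le, take_append_of_le_length hj.le, append_assoc,
    take_append (l₁ := A.drop j), take_append (l₁ := A.drop j), length_drop]
  congr 1
  set k := n - (A.length - j)
  have hB : n - 1 ≤ B.length := by
    have := congrArg length h
    simp only [length_take] at this
    omega
  calc (B ++ A.take j).take k = B.take k := take_append_of_le_length (by omega)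
    _ = (B.take (n - 1)).take k := by rw [take_take, min_eq_left (by omega)]
    _ = (A.take j).take k := by
      rw [← h, take_take, take_take, min_eq_left (by omega), min_eq_left (by omega)]

end List

namespace BWT

open List

theorem circFactor_of_prefix_rotate {u w : Word} {j : ℕ} (hu : u ≠ []) (h : u <+: w.rotate j) :
    CircFactor u w := by
  have hw : w ≠ [] := by
    rintro rfl
    exact hu (prefix_nil.1 (by simpa using h))
  exact ⟨j % w.length, Nat.mod_lt _ (length_pos_iff.2 hw), by rwa [rotate_mod]⟩

theorem occ_eq_one {u w : Word} (hu : u.Unbordered) (hw : w.length < 2 * u.length)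
    (h : CircFactor u w) : occ u w = 1 := by
  obtain ⟨j₀, hj₀, hpre⟩ := h
  unfold occ
  rw [← countP_eq_length_filter, ← count_eq_one_of_mem nodup_range (mem_range.2 hj₀), count,
    countP_congr]
  intro j hj
  rw [mem_range] at hj
  simpa using ⟨fun h => hu.eq_of_prefix_rotate hw hj hj₀ h hpre, fun h => h ▸ hpre⟩

theorem occ_append {u A B : Word} (hA : u.length ≤ A.length) (hB : u.length ≤ B.length)
    (h : A.take (u.length - 1) = B.take (u.length - 1)) :
    occ u (A ++ B) = occ u A + occ u B := by
  simp only [occ, ← countP_eq_length_filter]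
  rw [length_append, range_add, countP_append, countP_map]
  congr 1
  · refine countP_congr fun j hj => ?_
    simp only [decide_eq_true_eq, prefix_iff_eq_take (l₁ := u)]
    rw [take_rotate_append (mem_range.1 hj) hA h]
  · refine countP_congr fun j hj => ?_
    simp only [Function.comp_apply, decide_eq_true_eq, prefix_iff_eq_take (l₁ := u)]
    rw [← rotate_rotate, rotate_append_length_eq, take_rotate_append (mem_range.1 hj) hB h.symm]

theorem fib_eq_nat_fib : ∀ n, fib n = Nat.fib (n + 1)
  | 0 => rfl
  | 1 => rfl
  | n + 2 => by
    rw [fib, fib_eq_nat_fib n, fib_eq_nat_fib (n + 1), Nat.fib_add_two (n := n + 1), add_comm]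

theorem length_fw : ∀ n, (fw n).length = fib n
  | 0 => rfl
  | 1 => rfl
  | n + 2 => by simp [fw, fib, length_fw n, length_fw (n + 1), add_comm]

/-- The last two letters of `fw (n + 2)`: `ab` for even `n`, `ba` for odd `n`. -/
def fwTail : ℕ → Word
  | 0 => [la, lb]
  | n + 1 => (fwTail n).reverse

theorem fwTail_add_two (n : ℕ) : fwTail (n + 2) = fwTail n := reverse_reverse _

theorem fwTail_of_even {n : ℕ} (hn : Even n) : fwTail n = [la, lb] := by
  obtain ⟨k, rfl⟩ := hn
  induction k with
  | zero => rfl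
  | succ k ih => rw [show k + 1 + (k + 1) = k + k + 2 by omega, fwTail_add_two, ih]

theorem fwTail_succ_of_even {n : ℕ} (hn : Even n) : fwTail (n + 1) = [lb, la] := by
  rw [fwTail, fwTail_of_even hn]; rfl

theorem exists_fw_eq_append_fwTail :
    ∀ n, ∃ y, fw (n + 2) = y ++ fwTail n ∧ fw n ++ fw (n + 1) = y ++ fwTail (n + 1)
  | 0 => ⟨[], rfl, rfl⟩
  | n + 1 => by
    obtain ⟨y, h₁, h₂⟩ := exists_fw_eq_append_fwTail n
    refine ⟨fw (n + 1) ++ y, ?_, ?_⟩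
    · change fw (n + 1) ++ fw n ++ fw (n + 1) = _
      rw [append_assoc, h₂, append_assoc]
    · change fw (n + 1) ++ fw (n + 2) = _
      rw [h₁, fwTail_add_two, append_assoc]

theorem length_fwTail : ∀ n, (fwTail n).length = 2
  | 0 => rfl
  | n + 1 => by rw [fwTail, length_reverse, length_fwTail n]

theorem fw_eq_x_append_fwTail (n : ℕ) : fw (n + 2) = x (n + 2) ++ fwTail n := by
  obtain ⟨y, h, -⟩ := exists_fw_eq_append_fwTail n
  rw [h, x, h, length_append, length_fwTail, Nat.add_sub_cancel, take_left]

theorem fw_append_fw_succ (n : ℕ) : fw n ++ fw (n + 1) = x (n + 2) ++ fwTail (n + 1) := by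
  obtain ⟨y, h₁, h₂⟩ := exists_fw_eq_append_fwTail n
  rw [h₂, append_cancel_right (h₁.symm.trans (fw_eq_x_append_fwTail n))]

theorem x_add_four_eq_fw_add_three_append (n : ℕ) : x (n + 4) = fw (n + 3) ++ x (n + 2) := by
  apply append_cancel_right (bs := fwTail n)
  calc x (n + 4) ++ fwTail n = fw (n + 3) ++ fw (n + 2) := by
        rw [← fwTail_add_two, ← fw_eq_x_append_fwTail]; rfl
    _ = _ := by rw [fw_eq_x_append_fwTail n, append_assoc]

theorem x_add_four_eq_fw_add_two_append (n : ℕ) : x (n + 4) = fw (n + 2) ++ x (n + 3) := by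
  apply append_cancel_right (bs := fwTail (n + 1))
  calc x (n + 4) ++ fwTail (n + 1) = fw (n + 2) ++ fw (n + 3) := by
        rw [fw_append_fw_succ (n + 2), fwTail_add_two]
    _ = _ := by rw [fw_eq_x_append_fwTail (n + 1), append_assoc]

theorem x_reverse : ∀ n, (x n).reverse = x n
  | 0 | 1 | 2 | 3 => rfl
  | n + 4 => calc
      (x (n + 4)).reverse = (x (n + 2)).reverse ++ (fw (n + 3)).reverse := by
        rw [x_add_four_eq_fw_add_three_append, reverse_append]
      _ = x (n + 2) ++ (fwTail (n + 1)).reverse ++ x (n + 3) := by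
        rw [x_reverse (n + 2), fw_eq_x_append_fwTail (n + 1), reverse_append, x_reverse (n + 3),
          append_assoc]
      _ = x (n + 4) := by
        rw [x_add_four_eq_fw_add_two_append, fw_eq_x_append_fwTail n, ← fwTail_add_two n]
        rfl

theorem fw_add_three_of_even {n : ℕ} (hn : Even n) : fw (n + 3) = x (n + 3) ++ [lb] ++ [la] := by
  rw [fw_eq_x_append_fwTail (n + 1), fwTail_succ_of_even hn, append_assoc]; rfl

theorem fw_add_four_of_even {n : ℕ} (hn : Even n) :
    fw (n + 4) = x (n + 3) ++ [lb] ++ la :: fw (n + 2) := by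
  rw [show fw (n + 4) = fw (n + 3) ++ fw (n + 2) from rfl, fw_add_three_of_even hn]; simp

def axb (m : ℕ) : Word := la :: (x m ++ [lb])

theorem length_axb {m : ℕ} (hm : 2 ≤ m) : (axb m).length = fib m := by
  obtain ⟨n, rfl⟩ := Nat.exists_eq_add_of_le' hm
  have := congrArg length (fw_eq_x_append_fwTail n)
  simp only [length_fw, length_append, length_fwTail] at this
  simp [axb, this]

theorem unbordered_axb (m : ℕ) : (axb m).Unbordered :=
  unbordered_cons_append_singleton (by decide) (x_reverse m)

theorem circFactor_axb_fw {m : ℕ} (hm : 2 ≤ m) : CircFactor (axb m) (fw m) := by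
  suffices ∃ r, (fw m).rotate r = axb m by
    obtain ⟨r, hr⟩ := this
    exact circFactor_of_prefix_rotate (j := r) (cons_ne_nil _ _) (by rw [hr])
  obtain rfl | hm := hm.eq_or_lt
  · exact ⟨0, rfl⟩
  obtain ⟨n, hn, rfl | rfl⟩ := Nat.exists_even_add_three_or_add_four hm
  · exact ⟨_, by rw [fw_add_three_of_even hn, rotate_append_length_eq]; rfl⟩
  · refine ⟨(x (n + 3) ++ [lb]).length, ?_⟩
    rw [fw_add_four_of_even hn, rotate_append_length_eq]
    simp [axb, x_add_four_eq_fw_add_two_append]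

theorem circFactor_axb_fw_succ {m : ℕ} (hm : 2 ≤ m) : CircFactor (axb m) (fw (m + 1)) := by
  suffices ∃ r, axb m <+: (fw (m + 1)).rotate r by
    obtain ⟨r, hr⟩ := this
    exact circFactor_of_prefix_rotate (cons_ne_nil _ _) hr
  obtain rfl | rfl | hm : m = 2 ∨ m = 3 ∨ 3 ≤ m - 1 := by omega
  · exact ⟨0, by decide⟩
  · exact ⟨2, by decide⟩
  obtain ⟨n, hn, h | h⟩ := Nat.exists_even_add_three_or_add_four hm
  · obtain rfl : m = n + 4 := by omega
    refine ⟨(x (n + 3) ++ [lb]).length, ?_⟩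
    rw [show fw (n + 4 + 1) = fw (n + 4) ++ fw (n + 3) from rfl, fw_add_four_of_even hn,
      append_assoc, rotate_append_length_eq, axb, x_add_four_eq_fw_add_two_append,
      fw_add_three_of_even hn]
    simp
  · obtain rfl : m = n + 5 := by omega
    -- `axb (n + 5)` starts at the last letter of `fw (n + 5) = x (n + 5) ++ [lb, la]`, and fits
    -- there because `x (n + 5) ++ [lb]` has period `|fw (n + 4)|`.
    refine ⟨(x (n + 5) ++ [lb]).length, ?_⟩
    have hx : x (n + 3) ++ [lb] <+: x (n + 5) ++ [lb] := by
      rw [x_add_four_eq_fw_add_two_append (n + 1), fw_add_three_of_even hn]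
      simp
    rw [show fw (n + 5 + 1) = fw (n + 5) ++ fw (n + 4) from rfl,
      fw_add_three_of_even (n := n + 2) (hn.add even_two), append_assoc,
      rotate_append_length_eq, axb]
    nth_rewrite 1 [x_add_four_eq_fw_add_three_append (n + 1)]
    simpa using hx

theorem fib_pos (n : ℕ) : 0 < fib n := by
  rw [fib_eq_nat_fib]; exact Nat.fib_pos.2 n.succ_pos

theorem fib_succ_lt_two_mul {m : ℕ} (hm : 2 ≤ m) : fib (m + 1) < 2 * fib m := by
  rw [fib_eq_nat_fib, fib_eq_nat_fib, Nat.fib_add_two]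
  have := Nat.fib_lt_fib_succ hm
  omega

theorem occ_axb_fw_add {m : ℕ} (hm : 2 ≤ m) : ∀ t, occ (axb m) (fw (m + t)) = fib t
  | 0 => occ_eq_one (unbordered_axb m)
      (by rw [add_zero, length_fw, length_axb hm]; linarith [fib_pos m]) (circFactor_axb_fw hm)
  | 1 => occ_eq_one (unbordered_axb m)
      (by rw [length_fw, length_axb hm]; exact fib_succ_lt_two_mul hm) (circFactor_axb_fw_succ hm)
  | t + 2 => by
    have hle : ∀ s, (axb m).length ≤ (fw (m + s)).length := fun s => by
      rw [length_axb hm, length_fw, fib_eq_nat_fib, fib_eq_nat_fib]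
      exact Nat.fib_mono (by omega)
    have hle₀ : (axb m).length ≤ (fw (m + t)).length := hle t
    have hle₁ : (axb m).length ≤ (fw (m + t + 1)).length := hle (t + 1)
    -- `fw (m + t)` is a prefix of `fw (m + t + 1) = fw (m + t) ++ fw (m + t - 1)`.
    have htake : (fw (m + t + 1)).take ((axb m).length - 1) =
        (fw (m + t)).take ((axb m).length - 1) := by
      obtain ⟨n, hn⟩ : ∃ n, m + t = n + 1 := ⟨m + t - 1, by omega⟩
      rw [hn] at hle₀ ⊢
      exact take_append_of_le_length (by omega)
    change occ _ (fw (m + t + 1) ++ fw (m + t)) = fib (t + 1) + fib t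
    rw [occ_append hle₁ hle₀ htake]
    exact congrArg₂ (· + ·) (occ_axb_fw_add hm (t + 1)) (occ_axb_fw_add hm t)

end BWT

open BWT in
/-- for `k ≥ 2` and `0 ≤ i ≤ k-2`, the word `a·x_{2(k-i)}·b` has exactly `F_{2i}`
occurrences as a circular factor of `s_{2k}`, and `a·x_{2(k-i)-1}·b` has exactly `F_{2i+1}`. -/
theorem stmt9 (k : ℕ) (hk : 2 ≤ k) (i : ℕ) (hi : i ≤ k - 2) :
    occ (la :: (x (2*(k-i)) ++ [lb])) (fw (2*k)) = fib (2*i) ∧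
    occ (la :: (x (2*(k-i)-1) ++ [lb])) (fw (2*k)) = fib (2*i+1) := by
  constructor
  · have h := BWT.occ_axb_fw_add (m := 2 * (k - i)) (by omega) (2 * i)
    rwa [show 2 * (k - i) + 2 * i = 2 * k by omega] at h
  · have h := BWT.occ_axb_fw_add (m := 2 * (k - i) - 1) (by omega) (2 * i + 1)
    rwa [show 2 * (k - i) - 1 + (2 * i + 1) = 2 * k by omega] at h
end

section
/- For every k ≥ 2, let v = s_{2k}·b (so |v| = F_{2k}+1 and v^rev = b·b·a·x_{2k}). The conjugates of v^rev that begin with the letter b are exactly the F_{2k-2}+1 lexicographically largest conjugates, the smallest of them being b·a·x_{2k}·b; moreover, the suffix of bwt(v^rev) of length F_{2k-2}+1 equals b·a^{F_{2k-2}}. -/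
namespace BWT

section Lyndon

variable {α : Type*}

/-- `u` is smaller than `v` at a position where they differ, so `u < v` without `u` being a
prefix of `v`; unlike the lexicographic order this is preserved by appending arbitrary words. -/
def MismatchLt [LT α] (u v : List α) : Prop :=
  ∃ p a b u' v', a < b ∧ u = p ++ a :: u' ∧ v = p ++ b :: v'

lemma MismatchLt.append [LT α] {u v : List α} (h : MismatchLt u v) (s t : List α) :
    MismatchLt (u ++ s) (v ++ t) := by
  obtain ⟨p, a, b, u', v', hab, rfl, rfl⟩ := h
  exact ⟨p, a, b, u' ++ s, v' ++ t, hab, by simp, by simp⟩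

lemma MismatchLt.append_left [LT α] {u v : List α} (h : MismatchLt u v) (p : List α) :
    MismatchLt (p ++ u) (p ++ v) := by
  obtain ⟨q, a, b, u', v', hab, rfl, rfl⟩ := h
  exact ⟨p ++ q, a, b, u', v', hab, by simp, by simp⟩

lemma MismatchLt.trans [Preorder α] {u v w : List α} (h₁ : MismatchLt u v)
    (h₂ : MismatchLt v w) : MismatchLt u w := by
  obtain ⟨p, a, b, u', v', hab, rfl, hv⟩ := h₁
  obtain ⟨q, c, d, v'', w', hcd, hv', rfl⟩ := h₂
  rcases List.append_eq_append_iff.mp (hv.symm.trans hv') with ⟨r, rfl, hr⟩ | ⟨r, rfl, hr⟩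
  · cases r with
    | nil =>
      obtain ⟨rfl, -⟩ := List.cons.inj hr
      exact ⟨p, a, d, u', w', hab.trans hcd, rfl, by simp⟩
    | cons e r =>
      obtain ⟨rfl, -⟩ := List.cons.inj hr
      exact ⟨p, a, b, u', r ++ d :: w', hab, rfl, by simp⟩
  · cases r with
    | nil =>
      obtain ⟨rfl, -⟩ := List.cons.inj hr
      exact ⟨q, a, d, u', w', hab.trans hcd, by simp, rfl⟩
    | cons e r =>
      obtain ⟨rfl, -⟩ := List.cons.inj hr
      exact ⟨q, c, d, r ++ a :: u', w', hcd, by simp, rfl⟩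

lemma MismatchLt.lt [LT α] {u v : List α} (h : MismatchLt u v) : u < v := by
  obtain ⟨p, a, b, u', v', hab, rfl, rfl⟩ := h
  exact List.append_left_lt (List.Lex.rel hab)

/-- For nonempty `u` this is the Lyndon property: `u` is smaller than each of its proper suffixes,
necessarily at a mismatch since they are shorter. -/
def IsLyndon [LT α] (u : List α) : Prop :=
  ∀ s, s <:+ u → s ≠ [] → s ≠ u → MismatchLt u s

lemma isLyndon_singleton [LT α] (a : α) : IsLyndon [a] := by
  intro s hs hne hneq
  have hlen : s.length ≤ 1 := hs.length_le
  exact absurd (hs.eq_of_length (by simp at hlen ⊢; cases s <;> simp_all)) hneq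

lemma IsLyndon.append [Preorder α] {u v : List α} (hu : IsLyndon u) (hv : IsLyndon v)
    (huv : MismatchLt (u ++ v) v) : IsLyndon (u ++ v) := by
  intro s ⟨t, hts⟩ hne hneq
  rcases List.append_eq_append_iff.mp hts with ⟨r, hu_eq, rfl⟩ | ⟨r, -, hv_eq⟩
  · by_cases hr : r = []
    · simpa [hr] using huv
    have hru : r ≠ u := by rintro rfl; exact hneq rfl
    exact (hu r ⟨t, hu_eq.symm⟩ hr hru).append v v
  · by_cases hsv : s = v
    · exact hsv ▸ huv
    · exact huv.trans (hv s ⟨r, hv_eq.symm⟩ hne hsv)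

end Lyndon

section Sorted

variable {α : Type*}

lemma filter_not_append_filter_of_pairwise {R : α → α → Prop} {p : α → Bool} {L : List α}
    (hL : L.Pairwise R) (hp : ∀ a b, R a b → p a → p b) :
    L.filter (fun a => !p a) ++ L.filter p = L := by
  induction L with
  | nil => rfl
  | cons a t ih =>
    obtain ⟨ha, ht⟩ := List.pairwise_cons.mp hL
    by_cases hpa : p a
    · have hpt : ∀ b ∈ t, p b := fun b hb => hp a b (ha b hb) hpa
      simpa [hpa, List.filter_eq_self.mpr hpt] using hpt
    · simp [hpa, ih ht]

lemma drop_eq_filter_of_pairwise {R : α → α → Prop} {p : α → Bool} {L : List α}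
    (hL : L.Pairwise R) (hp : ∀ a b, R a b → p a → p b) :
    L.drop (L.length - L.countP p) = L.filter p := by
  have hlen := List.length_eq_countP_add_countP p (l := L)
  have hnot : (L.filter fun a => !p a).length = L.countP (fun a => ¬p a) := by
    rw [List.countP_eq_length_filter]; simp
  calc L.drop (L.length - L.countP p)
      = (L.filter (fun a => !p a) ++ L.filter p).drop (L.filter fun a => !p a).length := by
        rw [hnot, filter_not_append_filter_of_pairwise hL hp]; congr 2; omega
    _ = L.filter p := List.drop_left

lemma filter_le_eq_cons_filter_lt [LinearOrder α] [BEq α] [LawfulBEq α] {L : List α} {m : α}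
    (hL : L.Pairwise (· ≤ ·)) (hm : m ∈ L) (hcount : L.count m ≤ 1) :
    L.filter (fun a => m ≤ a) = m :: L.filter (fun a => m < a) := by
  induction L with
  | nil => simp at hm
  | cons a t ih =>
    obtain ⟨ha, ht⟩ := List.pairwise_cons.mp hL
    by_cases ham : a = m
    · subst ham
      have hnt : a ∉ t := fun h => by simp at hcount; exact List.count_eq_zero.mp hcount h
      rw [List.filter_cons_of_pos (by simp), List.filter_cons_of_neg (by simp)]
      exact congrArg _ <| List.filter_congr fun b hb => by
        simp [le_iff_lt_or_eq, show a ≠ b from fun h => hnt (h ▸ hb)]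
    · have hmt : m ∈ t := by simpa [Ne.symm ham] using hm
      have hlt : a < m := lt_of_le_of_ne (ha m hmt) ham
      simp [not_le.mpr hlt, not_lt.mpr hlt.le,
        ih ht hmt (by simpa [List.count_cons, ham] using hcount)]

end Sorted

lemma count_rotations_le_one {w m : Word} {i₀ : ℕ}
    (h : ∀ i < w.length, w.rotate i = m → i = i₀) : (rotations w).count m ≤ 1 := by
  rw [rotations, List.count_eq_countP, List.countP_map]
  calc _ ≤ (List.range w.length).countP (· == i₀) :=
        List.countP_mono_left fun i hi hm => by
          simpa using h i (List.mem_range.mp hi) (by simpa using hm)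
    _ ≤ 1 := by rw [← List.count_eq_countP, List.count_range]; split <;> omega

lemma length_filter_singleton_prefix_rotate (w : Word) (a : Letter) :
    ((List.range w.length).filter (fun i => decide ([a] <+: w.rotate i))).length = w.count a := by
  have hhead : ∀ i ∈ List.range w.length,
      decide ([a] <+: w.rotate i) = decide (w[i]? = some a) := fun i hi => by
    simp [List.singleton_prefix_iff_head?_eq_some, List.head?_rotate (List.mem_range.mp hi)]
  rw [List.filter_congr hhead]
  clear hhead
  induction w with
  | nil => rfl
  | cons b w ih =>
    simp only [List.length_cons, List.range_succ_eq_map, List.filter_cons, List.filter_map,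
      Function.comp_def, List.getElem?_cons_succ, List.getElem?_cons_zero, List.count_cons]
    by_cases hb : b = a <;> simp [hb, ih]

lemma length_bwt (w : Word) : (bwt w).length = w.length := by
  simp [bwt, sortedRotations, rotations]

lemma drop_bwt_eq {w m : Word} {i₀ : ℕ} (hi₀ : i₀ < w.length) (hm : w.rotate i₀ = m)
    (hm_last : m.getLastD la = lb)
    (hgt : ∀ i < w.length, m ≤ w.rotate i → i = i₀ ∨ (w.rotate i).getLastD la = la) :
    (bwt w).drop (w.length - (rotations w).countP (fun z => m ≤ z)) =
      lb :: List.replicate ((rotations w).countP (fun z => m ≤ z) - 1) la := by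
  set S := sortedRotations w
  have hperm : S.Perm (rotations w) := List.perm_insertionSort _ _
  have hsorted : S.Pairwise (· ≤ ·) := List.pairwise_insertionSort _ _
  have hlen : S.length = w.length := by simp [S, sortedRotations, rotations]
  have hrot : ∀ z ∈ S, ∃ i < w.length, w.rotate i = z := fun z hz => by
    simpa [rotations] using hperm.subset hz
  -- a second occurrence of `m` would end in `a`
  have hcount : S.count m ≤ 1 := hperm.count_eq m ▸ count_rotations_le_one fun i hi h =>
    (hgt i hi h.ge).resolve_right (by rw [h, hm_last]; decide)
  have hmS : m ∈ S := hperm.mem_iff.mpr (List.mem_map.mpr ⟨i₀, List.mem_range.mpr hi₀, hm⟩)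
  have hsplit := filter_le_eq_cons_filter_lt hsorted hmS hcount
  have hdrop := drop_eq_filter_of_pairwise hsorted (p := fun z => decide (m ≤ z))
    fun a b hab ha => by simpa using (of_decide_eq_true ha).trans hab
  have htail : ∀ z ∈ S.filter (fun z => m < z), z.getLastD la = la := by
    intro z hz
    obtain ⟨hzS, hmz⟩ := List.mem_filter.mp hz
    obtain ⟨i, hi, rfl⟩ := hrot z hzS
    refine (hgt i hi (of_decide_eq_true hmz).le).resolve_left ?_
    rintro rfl
    exact (of_decide_eq_true hmz).ne' hm
  rw [← hperm.countP_eq, ← hlen, bwt, ← List.map_drop, hdrop, hsplit, List.map_cons, hm_last,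
    List.countP_eq_length_filter, hsplit]
  simpa [List.eq_replicate_iff] using htail

def tailPair (n : ℕ) : Word := if n % 2 = 0 then [la, lb] else [lb, la]

lemma length_tailPair (n : ℕ) : (tailPair n).length = 2 := by
  unfold tailPair; split <;> rfl

lemma tailPair_add_two (n : ℕ) : tailPair (n + 2) = tailPair n := by
  simp [tailPair, Nat.add_mod_right]

lemma reverse_tailPair_succ (n : ℕ) : (tailPair (n + 1)).reverse = tailPair n := by
  unfold tailPair; split <;> split <;> first | rfl | omega

lemma tailPair_of_odd (m : ℕ) : tailPair (2 * m + 1) = [lb, la] := by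
  simp [tailPair, Nat.add_mod]

lemma x_eq_of_fw_eq_append {n : ℕ} {y u : Word} (h : fw n = y ++ u) (hu : u.length = 2) :
    x n = y := by
  simp [x, h, hu]

lemma fw_eq_x_append_tailPair_and_x_add_three (n : ℕ) :
    fw (n + 3) = x (n + 3) ++ tailPair (n + 1) ∧ x (n + 3) = fw (n + 1) ++ x (n + 2) := by
  induction n using Nat.twoStepInduction with
  | zero => exact ⟨rfl, rfl⟩
  | one => exact ⟨rfl, rfl⟩
  | more n ih₀ ih₁ =>
    have h : fw (n + 5) = (fw (n + 3) ++ x (n + 4)) ++ tailPair (n + 3) := by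
      calc fw (n + 5) = fw (n + 3) ++ fw (n + 2) ++ fw (n + 3) := by simp [fw]
        _ = _ := by rw [ih₀.1, ih₁.2, tailPair_add_two]; simp
    have hx := x_eq_of_fw_eq_append h (length_tailPair _)
    exact ⟨hx ▸ h, hx⟩

lemma fw_eq_x_append_tailPair (n : ℕ) : fw (n + 2) = x (n + 2) ++ tailPair n := by
  cases n with
  | zero => rfl
  | succ n => exact (fw_eq_x_append_tailPair_and_x_add_three n).1

lemma x_add_three (n : ℕ) : x (n + 3) = fw (n + 1) ++ x (n + 2) :=
  (fw_eq_x_append_tailPair_and_x_add_three n).2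

lemma x_add_four (n : ℕ) : x (n + 4) = x (n + 2) ++ tailPair n ++ x (n + 3) := by
  rw [x_add_three, fw_eq_x_append_tailPair]

lemma x_add_four' (n : ℕ) : x (n + 4) = x (n + 3) ++ tailPair (n + 1) ++ x (n + 2) := by
  refine x_eq_of_fw_eq_append (u := tailPair n) ?_ (length_tailPair n)
  rw [show fw (n + 4) = fw (n + 3) ++ fw (n + 2) from rfl, fw_eq_x_append_tailPair,
    fw_eq_x_append_tailPair]
  simp

lemma reverse_x (n : ℕ) : (x (n + 2)).reverse = x (n + 2) := by
  induction n using Nat.twoStepInduction with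
  | zero => rfl
  | one => rfl
  | more n ih₀ ih₁ =>
    conv_lhs => rw [x_add_four']
    rw [List.reverse_append, List.reverse_append, ih₀, ih₁, reverse_tailPair_succ,
      ← List.append_assoc, ← x_add_four]

def christoffel (n : ℕ) : Word := la :: (x n ++ [lb])

lemma christoffel_even (m : ℕ) :
    christoffel (2 * m + 4) = christoffel (2 * m + 3) ++ christoffel (2 * m + 2) := by
  simp [christoffel, x_add_four', tailPair_of_odd]

lemma christoffel_odd (m : ℕ) :
    christoffel (2 * m + 5) = christoffel (2 * m + 3) ++ christoffel (2 * m + 4) := by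
  rw [christoffel, show 2 * m + 5 = (2 * m + 1) + 4 by ring, x_add_four, tailPair_of_odd]
  simp [christoffel]

lemma christoffel_add_three_lt (m : ℕ) :
    MismatchLt (christoffel (2 * m + 3)) (christoffel (2 * m + 2)) := by
  induction m with
  | zero => exact ⟨[la], la, lb, [lb], [], rfl, rfl, rfl⟩
  | succ m ih =>
    show MismatchLt (christoffel (2 * m + 5)) (christoffel (2 * m + 4))
    have h := ((ih.append (christoffel (2 * m + 2)) []).append_left (christoffel (2 * m + 3)))
    rwa [List.append_nil, ← christoffel_even, ← christoffel_odd] at h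

lemma christoffel_add_four_lt (m : ℕ) :
    MismatchLt (christoffel (2 * m + 4)) (christoffel (2 * m + 2)) := by
  simpa [christoffel_even] using (christoffel_add_three_lt m).append (christoffel (2 * m + 2)) []

lemma isLyndon_christoffel (m : ℕ) :
    IsLyndon (christoffel (2 * m + 2)) ∧ IsLyndon (christoffel (2 * m + 3)) := by
  induction m with
  | zero =>
    have h₂ : IsLyndon (christoffel 2) :=
      (isLyndon_singleton la).append (isLyndon_singleton lb)
        ⟨[], la, lb, [lb], [], rfl, rfl, rfl⟩
    exact ⟨h₂, (isLyndon_singleton la).append h₂ (christoffel_add_three_lt 0)⟩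
  | succ m ih =>
    have h₄ : IsLyndon (christoffel (2 * m + 4)) := by
      rw [christoffel_even]
      exact ih.2.append ih.1 (christoffel_even m ▸ christoffel_add_four_lt m)
    refine ⟨h₄, ?_⟩
    rw [show 2 * (m + 1) + 3 = 2 * m + 5 by ring, christoffel_odd]
    exact ih.2.append h₄ (christoffel_odd m ▸ christoffel_add_three_lt (m + 1))

lemma head?_fw_succ (n : ℕ) : (fw (n + 1)).head? = some la := by
  induction n with
  | zero => rfl
  | succ n ih => simp [fw, ih]

lemma isChain_fw (n : ℕ) : (fw n).IsChain (fun a b => a = la ∨ b = la) := by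
  induction n using Nat.twoStepInduction with
  | zero => exact List.isChain_singleton _
  | one => exact List.isChain_singleton _
  | more n ih₀ ih₁ =>
    refine ih₁.append ih₀ fun a ha b hb => ?_
    cases n with
    | zero => exact .inl (by simpa [fw] using ha.symm)
    | succ n => exact .inr (by simpa [head?_fw_succ] using hb.symm)

lemma count_fw (n : ℕ) : (fw (n + 2)).count lb = fib n := by
  induction n using Nat.twoStepInduction with
  | zero => rfl
  | one => rfl
  | more n ih₀ ih₁ =>
    rw [show fw (n + 4) = fw (n + 3) ++ fw (n + 2) from rfl, List.count_append, ih₀, ih₁]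
    rfl

lemma fw_even (m : ℕ) : fw (2 * m + 2) = x (2 * m + 2) ++ [la, lb] := by
  simp [fw_eq_x_append_tailPair, tailPair]

lemma head?_x (n : ℕ) : (x (n + 3)).head? = some la := by
  simp [x_add_three, head?_fw_succ]

lemma getLast?_x (n : ℕ) : (x (n + 3)).getLast? = some la := by
  rw [List.getLast?_eq_head?_reverse, reverse_x (n + 1), head?_x]

lemma isChain_x (n : ℕ) : (x (n + 2)).IsChain (fun a b => a = la ∨ b = la) :=
  (fw_eq_x_append_tailPair n ▸ isChain_fw (n + 2)).left_of_append

lemma rotate_one_bba (X : Word) : ([lb, lb, la] ++ X).rotate 1 = [lb, la] ++ X ++ [lb] := by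
  simp

section BBA

variable {X : Word}

lemma rotate_add_three_bba {j : ℕ} (hj : j ≤ X.length) :
    ([lb, lb, la] ++ X).rotate (j + 3) = X.drop j ++ ([lb, lb, la] ++ X.take j) := by
  rw [List.rotate_eq_drop_append_take (by simp; omega)]
  simp

lemma rotate_bba_cases (hhead : X.head? = some la) (hlast : X.getLast? = some la)
    (hbb : X.IsChain (fun a b => a = la ∨ b = la)) (hc : IsLyndon (la :: (X ++ [lb])))
    {i : ℕ} (hi : i < ([lb, lb, la] ++ X).length) (hb : [lb] <+: ([lb, lb, la] ++ X).rotate i) :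
    i = 1 ∨ ([lb, la] ++ X ++ [lb] < ([lb, lb, la] ++ X).rotate i ∧
      (([lb, lb, la] ++ X).rotate i).getLastD la = la) := by
  match i, hi, hb with
  | 0, _, _ =>
    refine .inr ⟨MismatchLt.lt ⟨[lb], la, lb, X ++ [lb], la :: X, rfl, by simp, by simp⟩, ?_⟩
    simp [List.getLast?_cons, hlast]
  | 1, _, _ => exact .inl rfl
  | 2, _, hb => simp at hb
  | j + 3, hi, hb =>
    right
    have hj : j < X.length := by simp at hi; omega
    rw [rotate_add_three_bba hj.le, List.drop_eq_getElem_cons hj] at hb ⊢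
    rw [List.cons_append, List.singleton_prefix_cons_iff] at hb
    rw [← hb]
    set P := X.take j
    set Q := X.drop (j + 1)
    have hX : X = P ++ lb :: Q := by
      rw [hb, ← List.drop_eq_getElem_cons hj, List.take_append_drop]
    have hP : P ≠ [] := by rintro hP; simp [hX, hP] at hhead
    constructor
    -- the conjugate is `b·(Q·b)·(b·a·P)`, and `Q·b` is a proper suffix of `c = a·P·b·Q·b`
    · have hsuf : Q ++ [lb] <:+ la :: (X ++ [lb]) := ⟨la :: P ++ [lb], by simp [hX]⟩
      have hlt := hc (Q ++ [lb]) hsuf (by simp) fun h => by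
        have := congrArg List.length h; simp [hX] at this; omega
      simpa using ((hlt.append [] ([lb, la] ++ P)).append_left [lb]).lt
    · obtain ⟨a, ha⟩ : ∃ a, P.getLast? = some a :=
        Option.isSome_iff_exists.mp (by simpa using hP)
      have hab := (List.isChain_append.mp (hX ▸ hbb)).2.2 a ha lb rfl
      rw [← List.append_assoc, List.getLastD_eq_getLast?, List.getLast?_append, ha]
      simpa using hab

lemma le_rotate_bba_iff (hhead : X.head? = some la) (hlast : X.getLast? = some la)
    (hbb : X.IsChain (fun a b => a = la ∨ b = la)) (hc : IsLyndon (la :: (X ++ [lb])))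
    {i : ℕ} (hi : i < ([lb, lb, la] ++ X).length) :
    [lb, la] ++ X ++ [lb] ≤ ([lb, lb, la] ++ X).rotate i ↔
      [lb] <+: ([lb, lb, la] ++ X).rotate i := by
  constructor
  · intro hle
    obtain ⟨a, r, hr⟩ := List.exists_cons_of_ne_nil (l := ([lb, lb, la] ++ X).rotate i) (by simp)
    rw [hr] at hle ⊢
    cases a
    · exact absurd hle (not_le.mpr (List.Lex.rel (by decide)))
    · exact List.prefix_cons_iff.mpr (.inr ⟨[], rfl, List.nil_prefix⟩)
  · intro hb
    rcases rotate_bba_cases hhead hlast hbb hc hi hb with rfl | ⟨hlt, -⟩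
    · exact (rotate_one_bba X).ge
    · exact hlt.le

lemma countP_le_rotations_bba (hhead : X.head? = some la) (hlast : X.getLast? = some la)
    (hbb : X.IsChain (fun a b => a = la ∨ b = la)) (hc : IsLyndon (la :: (X ++ [lb]))) :
    (rotations ([lb, lb, la] ++ X)).countP (fun z => [lb, la] ++ X ++ [lb] ≤ z) =
      X.count lb + 2 := by
  have hcongr : ∀ i ∈ List.range ([lb, lb, la] ++ X).length,
      decide ([lb, la] ++ X ++ [lb] ≤ ([lb, lb, la] ++ X).rotate i) =
        decide ([lb] <+: ([lb, lb, la] ++ X).rotate i) := fun i hi => by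
    simp only [le_rotate_bba_iff hhead hlast hbb hc (List.mem_range.mp hi)]
  rw [rotations, List.countP_map, List.countP_eq_length_filter, Function.comp_def,
    List.filter_congr hcongr, length_filter_singleton_prefix_rotate]
  simp

lemma drop_bwt_bba (hhead : X.head? = some la) (hlast : X.getLast? = some la)
    (hbb : X.IsChain (fun a b => a = la ∨ b = la)) (hc : IsLyndon (la :: (X ++ [lb]))) :
    (bwt ([lb, lb, la] ++ X)).drop (([lb, lb, la] ++ X).length - (X.count lb + 2)) =
      [lb] ++ List.replicate (X.count lb + 1) la := by
  have h := drop_bwt_eq (i₀ := 1) (by simp) (rotate_one_bba X) List.getLastD_concat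
    fun i hi hle => (rotate_bba_cases hhead hlast hbb hc hi
      ((le_rotate_bba_iff hhead hlast hbb hc hi).mp hle)).imp id And.right
  rwa [countP_le_rotations_bba hhead hlast hbb hc] at h

end BBA

end BWT

open BWT in
/-- for `k ≥ 2` and `v = s_{2k}·b`, the conjugates of `v^rev` beginning with `b`
are exactly the `F_{2k-2}+1` lexicographically largest ones, the smallest of them being
`b·a·x_{2k}·b`; the suffix of `bwt(v^rev)` of length `F_{2k-2}+1` equals `b·a^{F_{2k-2}}`. -/
theorem stmt10 (k : ℕ) (hk : 2 ≤ k) :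
    (∃ i < ((fw (2*k) ++ [lb]).reverse).length,
      ((fw (2*k) ++ [lb]).reverse).rotate i = [lb, la] ++ x (2*k) ++ [lb]) ∧
    (∀ i < ((fw (2*k) ++ [lb]).reverse).length,
      ([lb, la] ++ x (2*k) ++ [lb] ≤ ((fw (2*k) ++ [lb]).reverse).rotate i ↔
        [lb] <+: ((fw (2*k) ++ [lb]).reverse).rotate i)) ∧
    ((List.range ((fw (2*k) ++ [lb]).reverse).length).filter
        (fun i => decide ([lb] <+: ((fw (2*k) ++ [lb]).reverse).rotate i))).length =
      fib (2*k-2) + 1 ∧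
    (bwt ((fw (2*k) ++ [lb]).reverse)).drop
        ((bwt ((fw (2*k) ++ [lb]).reverse)).length - (fib (2*k-2) + 1)) =
      [lb] ++ List.replicate (fib (2*k-2)) la := by
  obtain ⟨m, rfl⟩ : ∃ m, k = m + 2 := ⟨k - 2, by omega⟩
  rw [show 2 * (m + 2) = 2 * (m + 1) + 2 by ring, show 2 * (m + 1) + 2 - 2 = 2 * (m + 1) by omega]
  set X := x (2 * (m + 1) + 2)
  have hhead : X.head? = some la := head?_x (2 * m + 1)
  have hlast : X.getLast? = some la := getLast?_x (2 * m + 1)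
  have hbb := isChain_x (2 * (m + 1))
  have hc : IsLyndon (la :: (X ++ [lb])) := (isLyndon_christoffel (m + 1)).1
  have hw : (fw (2 * (m + 1) + 2) ++ [lb]).reverse = [lb, lb, la] ++ X := by
    simp [fw_even, X, reverse_x]
  have hfib : fib (2 * (m + 1)) = X.count lb + 1 := by
    simpa [fw_even] using (count_fw (2 * (m + 1))).symm
  rw [hw, hfib, length_bwt]
  refine ⟨⟨1, by simp, rotate_one_bba X⟩, fun i hi => le_rotate_bba_iff hhead hlast hbb hc hi,
    ?_, drop_bwt_bba hhead hlast hbb hc⟩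
  rw [length_filter_singleton_prefix_rotate]
  simp
end
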